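/- arXiv:0712.3735 — 2 statements merged into one kernel-verified Lean document; each statement's English description precedes it below -/
import Mathlib

section
/- For every m ≥ 1 and all coefficients a_1,…,a_{2m+1} ∈ ℝ, the function t = Σ_{j=1}^{2m+1} a_j φ_j satisfies ‖(t²)''‖_∞ ≤ 4π² D_m³ ‖t‖², i.e. sup_{x∈[0,1]} |(t²)''(x)| ≤ 4π² (2m+1)³ · Σ_j a_j². -/
/-!
Write `t = ∑ aⱼ φⱼ`. By Cauchy–Schwarz, `(t⁽ⁿ⁾ x)² ≤ ‖t‖² · ∑ⱼ (φⱼ⁽ⁿ⁾ x)²`, and since the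
`n`-th derivatives of `cos` and `sin` satisfy `(cos⁽ⁿ⁾)² + (sin⁽ⁿ⁾)² = 1`, pairing `φ₂ₖ` with `φ₂ₖ₊₁`
gives `∑ⱼ (φⱼ⁽ⁿ⁾ x)² ≤ Dₘ (2πm)²ⁿ`. Feeding the cases `n = 0, 1, 2` into `(t²)'' = 2t'² + 2tt''`
gives `|(t²)''| ≤ 4 Dₘ (2πm)² ‖t‖² = 16π²m² Dₘ ‖t‖² ≤ 4π² Dₘ³ ‖t‖²`.
-/

open Real Finset

/-- The trigonometric system on `[0,1]`: `φ 1 = 1`, `φ (2j) x = √2 cos(2πjx)`,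
`φ (2j+1) x = √2 sin(2πjx)` for `j ≥ 1`. -/
noncomputable def phi (j : ℕ) (x : ℝ) : ℝ :=
  if j = 1 then 1
  else if j % 2 = 0 then Real.sqrt 2 * Real.cos (2 * Real.pi * (j / 2 : ℕ) * x)
  else Real.sqrt 2 * Real.sin (2 * Real.pi * ((j - 1) / 2 : ℕ) * x)

theorem sum_Icc_one_two_mul_add_one {M : Type*} [AddCommMonoid M] (f : ℕ → M) (m : ℕ) :
    ∑ j ∈ Icc 1 (2 * m + 1), f j = f 1 + ∑ k ∈ Icc 1 m, (f (2 * k) + f (2 * k + 1)) := by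
  induction m with
  | zero => simp
  | succ m ih =>
    rw [show 2 * (m + 1) + 1 = 2 * m + 1 + 1 + 1 by ring, sum_Icc_succ_top (by omega),
      sum_Icc_succ_top (by omega), ih, sum_Icc_succ_top (by omega)]
    abel

theorem phi_one : phi 1 = fun _ => 1 := by
  ext x; simp [phi]

theorem phi_two_mul (k : ℕ) : phi (2 * k) = fun x => √2 * cos (2 * π * k * x) := by
  ext x; simp [phi]

theorem phi_two_mul_add_one {k : ℕ} (hk : k ≠ 0) :
    phi (2 * k + 1) = fun x => √2 * sin (2 * π * k * x) := by
  ext x; simp [phi, hk]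

theorem contDiff_phi (j : ℕ) {n : WithTop ℕ∞} : ContDiff ℝ n (phi j) := by
  unfold phi; split_ifs <;> fun_prop

theorem iteratedDeriv_cos_sq_add_iteratedDeriv_sin_sq (n : ℕ) (y : ℝ) :
    iteratedDeriv n cos y ^ 2 + iteratedDeriv n sin y ^ 2 = 1 := by
  induction n with
  | zero => simp
  | succ n ih => simp [← ih, add_comm]

theorem sq_iteratedDeriv_phi_two_mul_add_sq {k : ℕ} (hk : k ≠ 0) (n : ℕ) (x : ℝ) :
    iteratedDeriv n (phi (2 * k)) x ^ 2 + iteratedDeriv n (phi (2 * k + 1)) x ^ 2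
      = 2 * (2 * π * k) ^ (2 * n) := by
  rw [phi_two_mul, phi_two_mul_add_one hk, iteratedDeriv_const_mul_field,
    iteratedDeriv_const_mul_field, iteratedDeriv_comp_const_mul contDiff_cos,
    iteratedDeriv_comp_const_mul contDiff_sin]
  simp only [mul_pow, sq_sqrt zero_le_two, ← pow_mul]
  linear_combination 2 * (2 * π * k) ^ (2 * n) *
    iteratedDeriv_cos_sq_add_iteratedDeriv_sin_sq n (2 * π * k * x)

theorem sum_sq_iteratedDeriv_phi_le (m n : ℕ) (x : ℝ) :
    ∑ j ∈ Icc 1 (2 * m + 1), iteratedDeriv n (phi j) x ^ 2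
      ≤ (2 * m + 1) * (2 * π * m) ^ (2 * n) := by
  rw [sum_Icc_one_two_mul_add_one]
  have hone : iteratedDeriv n (phi 1) x ^ 2 ≤ (2 * π * m) ^ (2 * n) := by
    rw [phi_one, iteratedDeriv_const]
    split_ifs with hn
    · simp [hn]
    · rw [zero_pow two_ne_zero]; positivity
  have hpairs : ∑ k ∈ Icc 1 m, (iteratedDeriv n (phi (2 * k)) x ^ 2
      + iteratedDeriv n (phi (2 * k + 1)) x ^ 2) ≤ ∑ k ∈ Icc 1 m, 2 * (2 * π * m) ^ (2 * n) := by
    refine sum_le_sum fun k hk => ?_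
    obtain ⟨hk1, hkm⟩ := mem_Icc.1 hk
    rw [sq_iteratedDeriv_phi_two_mul_add_sq (by omega)]
    gcongr
  simp only [sum_const, Nat.card_Icc, add_tsub_cancel_right, nsmul_eq_mul] at hpairs
  linarith

theorem iteratedDeriv_sum_phi (s : Finset ℕ) (a : ℕ → ℝ) (n : ℕ) (x : ℝ) :
    iteratedDeriv n (fun y => ∑ j ∈ s, a j * phi j y) x
      = ∑ j ∈ s, a j * iteratedDeriv n (phi j) x := by
  rw [iteratedDeriv_fun_sum fun j _ => (contDiff_const.mul (contDiff_phi j)).contDiffAt]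
  simp only [iteratedDeriv_const_mul_field]

theorem sq_iteratedDeriv_sum_phi_le (m : ℕ) (a : ℕ → ℝ) (n : ℕ) (x : ℝ) :
    iteratedDeriv n (fun y => ∑ j ∈ Icc 1 (2 * m + 1), a j * phi j y) x ^ 2
      ≤ (∑ j ∈ Icc 1 (2 * m + 1), a j ^ 2) * ((2 * m + 1) * (2 * π * m) ^ (2 * n)) := by
  rw [iteratedDeriv_sum_phi]
  exact (sum_mul_sq_le_sq_mul_sq _ _ _).trans
    (mul_le_mul_of_nonneg_left (sum_sq_iteratedDeriv_phi_le m n x) (by positivity))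

theorem deriv_deriv_sq {f : ℝ → ℝ} (hf : ContDiff ℝ 2 f) (x : ℝ) :
    deriv (deriv fun y => f y ^ 2) x = 2 * deriv f x ^ 2 + 2 * f x * deriv (deriv f) x := by
  have hf1 : Differentiable ℝ f := hf.differentiable (by norm_num)
  have hf2 : Differentiable ℝ (deriv f) :=
    (contDiff_succ_iff_deriv.1 hf).2.2.differentiable one_ne_zero
  have h : deriv (fun y => f y ^ 2) = fun y => 2 * f y * deriv f y := by
    ext y; simp [hf1 y]
  rw [h]
  simp [hf1 x, hf2 x]
  ring

theorem abs_deriv_deriv_sq_le {f : ℝ → ℝ} (hf : ContDiff ℝ 2 f) {x B c : ℝ} (hc : 0 ≤ c)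
    (h0 : f x ^ 2 ≤ B) (h1 : deriv f x ^ 2 ≤ B * c) (h2 : deriv (deriv f) x ^ 2 ≤ B * c ^ 2) :
    |deriv (deriv fun y => f y ^ 2) x| ≤ 4 * B * c := by
  have hB : 0 ≤ B := (sq_nonneg _).trans h0
  have hprod : |f x * deriv (deriv f) x| ≤ B * c := by
    refine abs_le_of_sq_le_sq ?_ (by positivity)
    calc (f x * deriv (deriv f) x) ^ 2 = f x ^ 2 * deriv (deriv f) x ^ 2 := mul_pow ..
      _ ≤ B * (B * c ^ 2) := by gcongr
      _ = (B * c) ^ 2 := by ring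
  rw [deriv_deriv_sq hf]
  calc |2 * deriv f x ^ 2 + 2 * f x * deriv (deriv f) x|
      ≤ |2 * deriv f x ^ 2| + |2 * (f x * deriv (deriv f) x)| := by
        rw [← mul_assoc]; exact abs_add_le _ _
    _ = 2 * deriv f x ^ 2 + 2 * |f x * deriv (deriv f) x| := by
        rw [abs_of_nonneg (by positivity), abs_mul, abs_two]
    _ ≤ 4 * B * c := by linarith

theorem trig_sq_second_deriv_sup_bound_general (m : ℕ) (a : ℕ → ℝ) (x : ℝ) :
    |deriv (deriv (fun y => (∑ j ∈ Finset.Icc 1 (2 * m + 1), a j * phi j y) ^ 2)) x|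
      ≤ 4 * Real.pi ^ 2 * (2 * m + 1 : ℝ) ^ 3 * ∑ j ∈ Finset.Icc 1 (2 * m + 1), (a j) ^ 2 := by
  set t := fun y => ∑ j ∈ Icc 1 (2 * m + 1), a j * phi j y
  set S := ∑ j ∈ Icc 1 (2 * m + 1), a j ^ 2
  have ht : ContDiff ℝ 2 t := ContDiff.sum fun j _ => contDiff_const.mul (contDiff_phi j)
  have h0 := sq_iteratedDeriv_sum_phi_le m a 0 x
  have h1 := sq_iteratedDeriv_sum_phi_le m a 1 x
  have h2 := sq_iteratedDeriv_sum_phi_le m a 2 x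
  simp only [iteratedDeriv_zero, iteratedDeriv_succ] at h0 h1 h2
  calc _ ≤ 4 * (S * (2 * m + 1)) * (2 * π * m) ^ 2 :=
        abs_deriv_deriv_sq_le ht (by positivity) (by simpa using h0)
          (by simpa [mul_assoc] using h1) (by simpa [mul_assoc, ← pow_mul] using h2)
    _ = 4 * π ^ 2 * (2 * m + 1) * (4 * m ^ 2) * S := by ring
    _ ≤ 4 * π ^ 2 * (2 * m + 1) * (2 * m + 1) ^ 2 * S := by gcongr; nlinarith
    _ = _ := by ring

/-- For `t = Σ_{j=1}^{2m+1} a_j φ_j`, one has `‖(t²)''‖_∞ ≤ 4π² D_m³ ‖t‖²`, i.e.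
`|(t²)''(x)| ≤ 4π² (2m+1)³ Σ_j a_j²` for every `x ∈ [0,1]`. -/
theorem trig_sq_second_deriv_sup_bound (m : ℕ) (hm : 1 ≤ m) (a : ℕ → ℝ) (x : ℝ)
    (hx : x ∈ Set.Icc (0 : ℝ) 1) :
    |deriv (deriv (fun y => (∑ j ∈ Finset.Icc 1 (2 * m + 1), a j * phi j y) ^ 2)) x|
      ≤ 4 * Real.pi ^ 2 * (2 * m + 1 : ℝ) ^ 3 * ∑ j ∈ Finset.Icc 1 (2 * m + 1), (a j) ^ 2 :=
  trig_sq_second_deriv_sup_bound_general m a x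
end

section
/- Let (φ_j)_{j=1}^{D} be bounded measurable functions on [0,1] that are orthonormal in L²([0,1], dx) and satisfy Σ_{j=1}^{D} φ_j(x)² ≤ D for all x ∈ [0,1]. Let U_0,…,U_{N−1} be random variables with values in [0,1] and Z_1,…,Z_N square-integrable real random variables such that the pairs (U_i, Z_{i+1}) are identically distributed in i and, for every j and all 0 ≤ i, ℓ ≤ N−1 with ℓ ≥ i + 2, E[φ_j(U_i) Z_{i+1}] = 0 and E[φ_j(U_i) Z_{i+1} · φ_j(U_ℓ) Z_{ℓ+1}] = 0. Define ν_N(t) = (1/N) Σ_{i=0}^{N−1} t(U_i) Z_{i+1} for t in the linear span S of φ_1,…,φ_D. Then E[ sup { ν_N(t)² : t ∈ S, ‖t‖_{L²([0,1])} ≤ 1 } ] ≤ 3 D E[Z_1²]/N. -/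
/-!
By Cauchy–Schwarz and orthonormality, `sup_t ν_N(t)²` over the unit ball of `span φ` is at most
`∑_j ν_N(φ_j)²`. With `X_i = φ_j(U_i) Z_{i+1}`, each `E[ν_N(φ_j)²]` is `N⁻² ∑_{i,ℓ} E[X_i X_ℓ]`,
a double sum supported on the band `|i - ℓ| ≤ 1`; bounding `E[X_i X_ℓ]` by
`(E[X_i²] + E[X_ℓ²]) / 2` and counting at most three band entries per row and per column gives
`3 N⁻² ∑_i E[X_i²]`. Summing over `j`, the pointwise bound `∑_j φ_j² ≤ D` and the fact that
`Z_{i+1}` is distributed as `Z_1` give `3 D E[Z_1²] / N`.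
-/

open MeasureTheory ProbabilityTheory Finset

theorem card_filter_range_near_le_three (N i : ℕ) :
    #{ℓ ∈ range N | ℓ ≤ i + 1 ∧ i ≤ ℓ + 1} ≤ 3 := by
  calc #{ℓ ∈ range N | ℓ ≤ i + 1 ∧ i ≤ ℓ + 1}
      ≤ #(Icc (i - 1) (i + 1)) :=
        card_le_card fun ℓ hℓ => by simp only [mem_filter, mem_Icc] at hℓ ⊢; omega
    _ ≤ 3 := by simp only [Nat.card_Icc]; omega

theorem sum_range_ite_near_le_three_mul (N i : ℕ) {v : ℝ} (hv : 0 ≤ v) :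
    ∑ ℓ ∈ range N, (if ℓ ≤ i + 1 ∧ i ≤ ℓ + 1 then v else 0) ≤ 3 * v := by
  rw [← sum_filter, sum_const, nsmul_eq_mul]
  gcongr
  exact_mod_cast card_filter_range_near_le_three N i

theorem sum_range_sum_range_le_three_mul_of_band {N : ℕ} {c : ℕ → ℕ → ℝ} {v : ℕ → ℝ}
    (hv : ∀ i < N, 0 ≤ v i) (hc : ∀ i < N, ∀ ℓ < N, c i ℓ ≤ (v i + v ℓ) / 2)
    (hsymm : ∀ i ℓ, c i ℓ = c ℓ i) (hband : ∀ i ℓ, i < N → ℓ < N → i + 2 ≤ ℓ → c i ℓ = 0) :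
    ∑ i ∈ range N, ∑ ℓ ∈ range N, c i ℓ ≤ 3 * ∑ i ∈ range N, v i := by
  have hterm : ∀ i < N, ∀ ℓ < N, c i ℓ ≤
      ((if ℓ ≤ i + 1 ∧ i ≤ ℓ + 1 then v i else 0) +
        (if i ≤ ℓ + 1 ∧ ℓ ≤ i + 1 then v ℓ else 0)) / 2 := by
    intro i hi ℓ hℓ
    by_cases hnear : ℓ ≤ i + 1 ∧ i ≤ ℓ + 1
    · rw [if_pos hnear, if_pos hnear.symm]
      exact hc i hi ℓ hℓ
    · rw [if_neg hnear, if_neg (mt And.symm hnear), add_zero, zero_div]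
      rcases Nat.lt_or_ge (i + 1) ℓ with h | h
      · exact (hband i ℓ hi hℓ h).le
      · rw [hsymm]; exact (hband ℓ i hℓ hi (by omega)).le
  calc ∑ i ∈ range N, ∑ ℓ ∈ range N, c i ℓ
      ≤ ∑ i ∈ range N, ∑ ℓ ∈ range N,
          ((if ℓ ≤ i + 1 ∧ i ≤ ℓ + 1 then v i else 0) +
            (if i ≤ ℓ + 1 ∧ ℓ ≤ i + 1 then v ℓ else 0)) / 2 :=
        sum_le_sum fun i hi => sum_le_sum fun ℓ hℓ =>
          hterm i (mem_range.1 hi) ℓ (mem_range.1 hℓ)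
    _ = (∑ i ∈ range N, ∑ ℓ ∈ range N, (if ℓ ≤ i + 1 ∧ i ≤ ℓ + 1 then v i else 0) +
          ∑ i ∈ range N, ∑ ℓ ∈ range N, (if i ≤ ℓ + 1 ∧ ℓ ≤ i + 1 then v ℓ else 0)) / 2 := by
        simp only [← sum_add_distrib, sum_div]
    _ = (∑ i ∈ range N, ∑ ℓ ∈ range N, (if ℓ ≤ i + 1 ∧ i ≤ ℓ + 1 then v i else 0) +
          ∑ i ∈ range N, ∑ ℓ ∈ range N, (if ℓ ≤ i + 1 ∧ i ≤ ℓ + 1 then v i else 0)) / 2 := by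
        congr 2
        exact sum_comm
    _ ≤ (∑ i ∈ range N, 3 * v i + ∑ i ∈ range N, 3 * v i) / 2 := by
        have hrow := sum_le_sum fun i (hi : i ∈ range N) =>
          sum_range_ite_near_le_three_mul N i (hv i (mem_range.1 hi))
        gcongr
    _ = 3 * ∑ i ∈ range N, v i := by rw [← mul_sum]; ring

section SecondMoments

variable {Ω : Type*} [MeasurableSpace Ω] {P : Measure Ω}

theorem integral_mul_le_half_add_integral_sq {X Y : Ω → ℝ} (hX : MemLp X 2 P)
    (hY : MemLp Y 2 P) :
    ∫ ω, X ω * Y ω ∂P ≤ (∫ ω, X ω ^ 2 ∂P + ∫ ω, Y ω ^ 2 ∂P) / 2 := by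
  rw [← integral_add hX.integrable_sq hY.integrable_sq, ← integral_div]
  refine integral_mono (hX.integrable_mul hY) ((hX.integrable_sq.add hY.integrable_sq).div_const 2)
    fun ω => ?_
  nlinarith [sq_nonneg (X ω - Y ω)]

theorem integral_sq_sum_range_le_three_mul_of_lag_two {N : ℕ} {X : ℕ → Ω → ℝ}
    (hX : ∀ i < N, MemLp (X i) 2 P)
    (horth : ∀ i ℓ : ℕ, i < N → ℓ < N → i + 2 ≤ ℓ → ∫ ω, X i ω * X ℓ ω ∂P = 0) :
    ∫ ω, (∑ i ∈ range N, X i ω) ^ 2 ∂P ≤ 3 * ∑ i ∈ range N, ∫ ω, X i ω ^ 2 ∂P := by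
  have hint : ∀ i ∈ range N, ∀ ℓ ∈ range N, Integrable (fun ω => X i ω * X ℓ ω) P :=
    fun i hi ℓ hℓ => (hX i (mem_range.1 hi)).integrable_mul (hX ℓ (mem_range.1 hℓ))
  have hexpand : ∫ ω, (∑ i ∈ range N, X i ω) ^ 2 ∂P
      = ∑ i ∈ range N, ∑ ℓ ∈ range N, ∫ ω, X i ω * X ℓ ω ∂P := by
    simp_rw [sq, sum_mul_sum]
    rw [integral_finsetSum _ fun i hi => integrable_finsetSum _ (hint i hi)]
    exact sum_congr rfl fun i hi => integral_finsetSum _ (hint i hi)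
  rw [hexpand]
  refine sum_range_sum_range_le_three_mul_of_band
    (fun i _ => integral_nonneg fun ω => sq_nonneg (X i ω))
    (fun i hi ℓ hℓ => integral_mul_le_half_add_integral_sq (hX i hi) (hX ℓ hℓ))
    (fun i ℓ => by simp only [mul_comm]) horth

end SecondMoments

theorem integral_sq_sum_mul_of_orthonormal {α ι : Type*} [MeasurableSpace α] {μ : Measure α}
    [Fintype ι] [DecidableEq ι] {φ : ι → α → ℝ} (hφ : ∀ j, MemLp (φ j) 2 μ)
    (hortho : ∀ j j', ∫ x, φ j x * φ j' x ∂μ = if j = j' then 1 else 0) (a : ι → ℝ) :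
    ∫ x, (∑ j, a j * φ j x) ^ 2 ∂μ = ∑ j, a j ^ 2 := by
  have hint : ∀ j j', Integrable (fun x => a j * a j' * (φ j x * φ j' x)) μ :=
    fun j j' => ((hφ j).integrable_mul (hφ j')).const_mul _
  have hexpand : ∀ x, (∑ j, a j * φ j x) ^ 2 = ∑ j, ∑ j', a j * a j' * (φ j x * φ j' x) := by
    intro x
    rw [sq, sum_mul_sum]
    exact sum_congr rfl fun j _ => sum_congr rfl fun j' _ => by ring
  simp_rw [hexpand]
  rw [integral_finsetSum _ fun j _ => integrable_finsetSum _ fun j' _ => hint j j']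
  refine sum_congr rfl fun j _ => ?_
  simp_rw [integral_finsetSum _ fun j' _ => hint j j', integral_const_mul, hortho, mul_ite,
    mul_one, mul_zero, sum_ite_eq, mem_univ, if_true, sq]

theorem intervalIntegral_sq_sum_mul_of_orthonormal {ι : Type*} [Fintype ι] [DecidableEq ι]
    {φ : ι → ℝ → ℝ} {a b C : ℝ} (hab : a ≤ b) (hφ : ∀ j, Measurable (φ j))
    (hφC : ∀ j, ∀ x ∈ Set.Icc a b, |φ j x| ≤ C)
    (hortho : ∀ j j', ∫ x in a..b, φ j x * φ j' x = if j = j' then 1 else 0) (c : ι → ℝ) :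
    ∫ x in a..b, (∑ j, c j * φ j x) ^ 2 = ∑ j, c j ^ 2 := by
  have hφL2 : ∀ j, MemLp (φ j) 2 (volume.restrict (Set.Ioc a b)) := fun j =>
    MemLp.of_bound (hφ j).aestronglyMeasurable C <| ae_restrict_of_forall_mem measurableSet_Ioc
      fun x hx => (Real.norm_eq_abs _).trans_le (hφC j x (Set.Ioc_subset_Icc_self hx))
  rw [intervalIntegral.integral_of_le hab]
  exact integral_sq_sum_mul_of_orthonormal hφL2
    (fun j j' => (intervalIntegral.integral_of_le hab).symm.trans (hortho j j')) c

section EmpiricalProcess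

variable {Ω : Type*}

noncomputable def empiricalProcess (N : ℕ) (U Z : ℕ → Ω → ℝ) (t : ℝ → ℝ) (ω : Ω) : ℝ :=
  (N : ℝ)⁻¹ * ∑ i ∈ range N, t (U i ω) * Z (i + 1) ω

variable {N : ℕ} {U Z : ℕ → Ω → ℝ}

theorem empiricalProcess_sum_mul {ι : Type*} (s : Finset ι) (a : ι → ℝ) (φ : ι → ℝ → ℝ)
    (ω : Ω) :
    empiricalProcess N U Z (fun x => ∑ j ∈ s, a j * φ j x) ω
      = ∑ j ∈ s, a j * empiricalProcess N U Z (φ j) ω := by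
  simp only [empiricalProcess, mul_sum, sum_mul]
  rw [sum_comm]
  exact sum_congr rfl fun j _ => sum_congr rfl fun i _ => by ring

theorem iSup_empiricalProcess_sq_le {ι : Type*} [Fintype ι] (φ : ι → ℝ → ℝ)
    {p : (ι → ℝ) → Prop} (hp : ∀ a, p a → ∑ j, a j ^ 2 ≤ 1) (ω : Ω) :
    ⨆ a : {a // p a}, empiricalProcess N U Z (fun x => ∑ j, (a : ι → ℝ) j * φ j x) ω ^ 2
      ≤ ∑ j, empiricalProcess N U Z (φ j) ω ^ 2 := by
  refine Real.iSup_le (fun ⟨a, ha⟩ => ?_) (sum_nonneg fun j _ => sq_nonneg _)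
  rw [empiricalProcess_sum_mul]
  calc (∑ j, a j * empiricalProcess N U Z (φ j) ω) ^ 2
      ≤ (∑ j, a j ^ 2) * ∑ j, empiricalProcess N U Z (φ j) ω ^ 2 :=
        sum_mul_sq_le_sq_mul_sq _ _ _
    _ ≤ ∑ j, empiricalProcess N U Z (φ j) ω ^ 2 :=
        mul_le_of_le_one_left (sum_nonneg fun j _ => sq_nonneg _) (hp a ha)

variable [MeasurableSpace Ω] {P : Measure Ω}

theorem memLp_comp_mul_of_abs_le {t : ℝ → ℝ} {C : ℝ} (ht : Measurable t)
    (hU : ∀ i, Measurable (U i)) (htC : ∀ i < N, ∀ ω, |t (U i ω)| ≤ C)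
    (hZ : ∀ i < N, MemLp (Z (i + 1)) 2 P) :
    ∀ i < N, MemLp (fun ω => t (U i ω) * Z (i + 1) ω) 2 P := fun i hi =>
  (hZ i hi).of_le_mul ((ht.comp (hU i)).aestronglyMeasurable.mul (hZ i hi).aestronglyMeasurable) <|
    ae_of_all _ fun ω => by
      rw [norm_mul, Real.norm_eq_abs]
      exact mul_le_mul_of_nonneg_right (htC i hi ω) (norm_nonneg _)

theorem memLp_empiricalProcess {t : ℝ → ℝ}
    (ht : ∀ i < N, MemLp (fun ω => t (U i ω) * Z (i + 1) ω) 2 P) :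
    MemLp (empiricalProcess N U Z t) 2 P :=
  (memLp_finsetSum _ fun i hi => ht i (mem_range.1 hi)).const_mul _

theorem integral_empiricalProcess_sq_le {t : ℝ → ℝ}
    (ht : ∀ i < N, MemLp (fun ω => t (U i ω) * Z (i + 1) ω) 2 P)
    (horth : ∀ i ℓ : ℕ, i < N → ℓ < N → i + 2 ≤ ℓ →
      ∫ ω, (t (U i ω) * Z (i + 1) ω) * (t (U ℓ ω) * Z (ℓ + 1) ω) ∂P = 0) :
    ∫ ω, empiricalProcess N U Z t ω ^ 2 ∂P
      ≤ 3 / N ^ 2 * ∑ i ∈ range N, ∫ ω, (t (U i ω) * Z (i + 1) ω) ^ 2 ∂P := by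
  calc ∫ ω, empiricalProcess N U Z t ω ^ 2 ∂P
      = (N : ℝ)⁻¹ ^ 2 * ∫ ω, (∑ i ∈ range N, t (U i ω) * Z (i + 1) ω) ^ 2 ∂P := by
        simp_rw [empiricalProcess, mul_pow]
        exact integral_const_mul _ _
    _ ≤ (N : ℝ)⁻¹ ^ 2 * (3 * ∑ i ∈ range N, ∫ ω, (t (U i ω) * Z (i + 1) ω) ^ 2 ∂P) := by
        gcongr
        exact integral_sq_sum_range_le_three_mul_of_lag_two ht horth
    _ = 3 / N ^ 2 * ∑ i ∈ range N, ∫ ω, (t (U i ω) * Z (i + 1) ω) ^ 2 ∂P := by ring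

theorem integral_iSup_empiricalProcess_sq_le {ι : Type*} [Fintype ι] {φ : ι → ℝ → ℝ}
    {p : (ι → ℝ) → Prop} (hp : ∀ a, p a → ∑ j, a j ^ 2 ≤ 1)
    (hX : ∀ j, ∀ i < N, MemLp (fun ω => φ j (U i ω) * Z (i + 1) ω) 2 P)
    (horth : ∀ (j : ι) (i ℓ : ℕ), i < N → ℓ < N → i + 2 ≤ ℓ →
      ∫ ω, (φ j (U i ω) * Z (i + 1) ω) * (φ j (U ℓ ω) * Z (ℓ + 1) ω) ∂P = 0) :
    ∫ ω, (⨆ a : {a // p a},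
        empiricalProcess N U Z (fun x => ∑ j, (a : ι → ℝ) j * φ j x) ω ^ 2) ∂P
      ≤ 3 / N ^ 2 * ∑ i ∈ range N, ∑ j, ∫ ω, (φ j (U i ω) * Z (i + 1) ω) ^ 2 ∂P := by
  have hν : ∀ j, Integrable (fun ω => empiricalProcess N U Z (φ j) ω ^ 2) P := fun j =>
    (memLp_empiricalProcess (hX j)).integrable_sq
  calc _ ≤ ∫ ω, ∑ j, empiricalProcess N U Z (φ j) ω ^ 2 ∂P :=
        integral_mono_of_nonneg (ae_of_all _ fun ω => Real.iSup_nonneg fun _ => sq_nonneg _)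
          (integrable_finsetSum _ fun j _ => hν j) (ae_of_all _ (iSup_empiricalProcess_sq_le φ hp))
    _ = ∑ j, ∫ ω, empiricalProcess N U Z (φ j) ω ^ 2 ∂P := integral_finsetSum _ fun j _ => hν j
    _ ≤ ∑ j, 3 / N ^ 2 * ∑ i ∈ range N, ∫ ω, (φ j (U i ω) * Z (i + 1) ω) ^ 2 ∂P :=
        sum_le_sum fun j _ => integral_empiricalProcess_sq_le (hX j) (horth j)
    _ = 3 / N ^ 2 * ∑ i ∈ range N, ∑ j, ∫ ω, (φ j (U i ω) * Z (i + 1) ω) ^ 2 ∂P := by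
        rw [← mul_sum, sum_comm]

end EmpiricalProcess

theorem sum_integral_sq_mul_le {Ω ι : Type*} [MeasurableSpace Ω] {P : Measure Ω} (s : Finset ι)
    {f : ι → Ω → ℝ} {g : Ω → ℝ} {C : ℝ} (hfg : ∀ j ∈ s, MemLp (fun ω => f j ω * g ω) 2 P)
    (hg : MemLp g 2 P) (hf : ∀ ω, ∑ j ∈ s, f j ω ^ 2 ≤ C) :
    ∑ j ∈ s, ∫ ω, (f j ω * g ω) ^ 2 ∂P ≤ C * ∫ ω, g ω ^ 2 ∂P := by
  rw [← integral_finsetSum _ fun j hj => (hfg j hj).integrable_sq, ← integral_const_mul]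
  refine integral_mono (integrable_finsetSum _ fun j hj => (hfg j hj).integrable_sq)
    (hg.integrable_sq.const_mul _) fun ω => ?_
  simp only [mul_pow, ← sum_mul]
  exact mul_le_mul_of_nonneg_right (hf ω) (sq_nonneg _)

theorem empirical_process_sup_bound_general {Ω : Type*} [MeasurableSpace Ω] (P : Measure Ω)
    (D N : ℕ)
    (φ : Fin D → ℝ → ℝ)
    (hφmeas : ∀ j, Measurable (φ j))
    (hortho : ∀ j j' : Fin D,
      ∫ x in (0 : ℝ)..1, φ j x * φ j' x = if j = j' then 1 else 0)
    (hsum : ∀ x ∈ Set.Icc (0 : ℝ) 1, ∑ j, (φ j x) ^ 2 ≤ (D : ℝ))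
    (U Z : ℕ → Ω → ℝ)
    (hUmeas : ∀ i, Measurable (U i))
    (hUrange : ∀ i, i < N → ∀ ω, U i ω ∈ Set.Icc (0 : ℝ) 1)
    (hZ2 : ∀ i, 1 ≤ i → i ≤ N → MemLp (Z i) 2 P)
    (hid : ∀ i, i < N → Measure.map (fun ω => (U i ω, Z (i + 1) ω)) P
      = Measure.map (fun ω => (U 0 ω, Z 1 ω)) P)
    (horth : ∀ (j : Fin D) (i ℓ : ℕ), i < N → ℓ < N → i + 2 ≤ ℓ →
      ∫ ω, (φ j (U i ω) * Z (i + 1) ω) * (φ j (U ℓ ω) * Z (ℓ + 1) ω) ∂P = 0) :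
    ∫ ω, (⨆ a : {a : Fin D → ℝ //
          ∫ x in (0 : ℝ)..1, (∑ j, a j * φ j x) ^ 2 ≤ 1},
        ((N : ℝ)⁻¹ * ∑ i ∈ Finset.range N,
          (∑ j, (a : Fin D → ℝ) j * φ j (U i ω)) * Z (i + 1) ω) ^ 2) ∂P
      ≤ 3 * D * (∫ ω, (Z 1 ω) ^ 2 ∂P) / N := by
  have hφ_le : ∀ j, ∀ x ∈ Set.Icc (0 : ℝ) 1, |φ j x| ≤ √D := fun j x hx =>
    Real.abs_le_sqrt <|
      (single_le_sum (fun j _ => sq_nonneg (φ j x)) (mem_univ j)).trans (hsum x hx)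
  have hball : ∀ a : Fin D → ℝ, ∫ x in (0 : ℝ)..1, (∑ j, a j * φ j x) ^ 2 ≤ 1 →
      ∑ j, a j ^ 2 ≤ 1 := fun a ha => by
    rwa [intervalIntegral_sq_sum_mul_of_orthonormal zero_le_one hφmeas hφ_le hortho] at ha
  have hZ : ∀ i < N, MemLp (Z (i + 1)) 2 P := fun i hi => hZ2 (i + 1) (by omega) (by omega)
  have hX : ∀ j, ∀ i < N, MemLp (fun ω => φ j (U i ω) * Z (i + 1) ω) 2 P := fun j =>
    memLp_comp_mul_of_abs_le (hφmeas j) hUmeas (fun i hi ω => hφ_le j _ (hUrange i hi ω)) hZ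
  have hZsq : ∀ i < N, ∫ ω, Z (i + 1) ω ^ 2 ∂P = ∫ ω, Z 1 ω ^ 2 ∂P := fun i hi =>
    IdentDistrib.integral_eq <|
      (IdentDistrib.comp ⟨(hUmeas i).aemeasurable.prodMk (hZ i hi).aemeasurable,
        (hUmeas 0).aemeasurable.prodMk (hZ 0 (by omega)).aemeasurable, hid i hi⟩
        measurable_snd).comp (measurable_id.pow_const 2)
  calc _ ≤ 3 / N ^ 2 * ∑ i ∈ range N, ∑ j, ∫ ω, (φ j (U i ω) * Z (i + 1) ω) ^ 2 ∂P :=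
        integral_iSup_empiricalProcess_sq_le hball hX horth
    _ ≤ 3 / N ^ 2 * ∑ i ∈ range N, D * ∫ ω, Z 1 ω ^ 2 ∂P := by
        gcongr with i hi
        rw [← hZsq i (mem_range.1 hi)]
        exact sum_integral_sq_mul_le _ (fun j _ => hX j i (mem_range.1 hi)) (hZ i (mem_range.1 hi))
          fun ω => hsum _ (hUrange i (mem_range.1 hi) ω)
    _ = 3 * D * (∫ ω, (Z 1 ω) ^ 2 ∂P) / N := by
        rw [sum_const, card_range, nsmul_eq_mul]
        rcases eq_or_ne (N : ℝ) 0 with hN | hN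
        · simp [hN]
        · field_simp

/-- Abstract version of Lemma 3 of the paper: for an orthonormal system `(φ_j)_{j<D}` of
bounded measurable functions on `[0,1]` with `Σ_j φ_j(x)² ≤ D`, design variables `U_i` with
values in `[0,1]` and noise variables `Z_{i+1}` such that the pairs `(U_i, Z_{i+1})` are
identically distributed and the terms `φ_j(U_i)Z_{i+1}` are centered with vanishing
correlations at all lags `≥ 2`, the empirical process `ν_N(t) = (1/N) Σ_i t(U_i) Z_{i+1}`
satisfies `E[sup {ν_N(t)² : t ∈ span(φ), ‖t‖_{L²([0,1])} ≤ 1}] ≤ 3 D E[Z_1²]/N`. -/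
theorem empirical_process_sup_bound {Ω : Type*} [MeasurableSpace Ω] (P : Measure Ω)
    [IsProbabilityMeasure P] (D N : ℕ) (hD : 1 ≤ D) (hN : 1 ≤ N)
    (φ : Fin D → ℝ → ℝ)
    (hφmeas : ∀ j, Measurable (φ j))
    (hφbdd : ∀ j, ∃ C : ℝ, ∀ x ∈ Set.Icc (0 : ℝ) 1, |φ j x| ≤ C)
    (hortho : ∀ j j' : Fin D,
      ∫ x in (0 : ℝ)..1, φ j x * φ j' x = if j = j' then 1 else 0)
    (hsum : ∀ x ∈ Set.Icc (0 : ℝ) 1, ∑ j, (φ j x) ^ 2 ≤ (D : ℝ))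
    (U Z : ℕ → Ω → ℝ)
    (hUmeas : ∀ i, Measurable (U i)) (hZmeas : ∀ i, Measurable (Z i))
    (hUrange : ∀ i, i < N → ∀ ω, U i ω ∈ Set.Icc (0 : ℝ) 1)
    (hZ2 : ∀ i, 1 ≤ i → i ≤ N → MemLp (Z i) 2 P)
    (hid : ∀ i, i < N → Measure.map (fun ω => (U i ω, Z (i + 1) ω)) P
      = Measure.map (fun ω => (U 0 ω, Z 1 ω)) P)
    (hcentered : ∀ (j : Fin D) (i : ℕ), i < N → ∫ ω, φ j (U i ω) * Z (i + 1) ω ∂P = 0)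
    (horth : ∀ (j : Fin D) (i ℓ : ℕ), i < N → ℓ < N → i + 2 ≤ ℓ →
      ∫ ω, (φ j (U i ω) * Z (i + 1) ω) * (φ j (U ℓ ω) * Z (ℓ + 1) ω) ∂P = 0) :
    ∫ ω, (⨆ a : {a : Fin D → ℝ //
          ∫ x in (0 : ℝ)..1, (∑ j, a j * φ j x) ^ 2 ≤ 1},
        ((N : ℝ)⁻¹ * ∑ i ∈ Finset.range N,
          (∑ j, (a : Fin D → ℝ) j * φ j (U i ω)) * Z (i + 1) ω) ^ 2) ∂P
      ≤ 3 * D * (∫ ω, (Z 1 ω) ^ 2 ∂P) / N :=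
  empirical_process_sup_bound_general P D N φ hφmeas hortho hsum U Z hUmeas hUrange hZ2 hid horth
end
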